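/- arXiv:2411.17635 — 2 statements merged into one kernel-verified Lean document; each statement's English description precedes it below -/
import Mathlib

section
/- Let H(A) = (1/2) |A|². If λ, μ ∈ ℝ^{3×3} satisfy |λ| ≤ 3/2, then g_H(λ, μ) ≥ (1/14) |μ|². In particular, the choice A = (1/7) μ gives μ:A + λ:T(A) − (1/2)|A|² ≥ (1/14)|μ|². -/
/-!
`T(A)` is twice the cofactor matrix of `A`, so `|T(A)|² = 2(|A|⁴ - |AᵀA|²) ≤ 2|A|⁴`, and by
Cauchy–Schwarz `|λ:T(μ)| ≤ √2 |λ| |μ|² ≤ 3|μ|²` when `|λ| ≤ 3/2`. Since `T` is quadratic, at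
`A = μ/7` the objective equals `|μ|²/7 + λ:T(μ)/49 - |μ|²/98 ≥ (14 - 6 - 1)|μ|²/98 = |μ|²/14`.
-/

open scoped BigOperators

noncomputable section

/-- `3 × 3` real matrices, as functions of (row, column). -/
abbrev M33 := Fin 3 → Fin 3 → ℝ

/-- The Levi-Civita symbol on indices in `Fin 3`. -/
def eps (i j k : Fin 3) : ℝ :=
  ((i.val : ℝ) - j.val) * ((j.val : ℝ) - k.val) * ((k.val : ℝ) - i.val) / 2

/-- The contraction `X : Y = Σ_{i,j} X_{ij} Y_{ij}`. -/
def dotM (X Y : M33) : ℝ := ∑ i, ∑ j, X i j * Y i j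

/-- `T(A)_{Zp} = ε_{pqr} ε_{ZBC} A_{Bq} A_{Cr}`. -/
def Tmap (A : M33) : M33 :=
  fun Z p => ∑ q, ∑ r, ∑ B, ∑ C, eps p q r * eps Z B C * A B q * A C r

/-- The Frobenius norm on `M33`. -/
def fnorm (A : M33) : ℝ := Real.sqrt (∑ i, ∑ j, (A i j) ^ 2)

/-- `g_H(λ, μ) = sup_{A} ( A:μ + λ:T(A) − H(A) )`, valued in `ℝ ∪ {±∞}` (the
supremum is never `-∞` since `H` is real-valued). -/
def gH (H : M33 → ℝ) (lam mu : M33) : EReal :=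
  ⨆ A : M33, ((dotM A mu + dotM lam (Tmap A) - H A : ℝ) : EReal)

lemma fnorm_sq (A : M33) : fnorm A ^ 2 = ∑ i, ∑ j, A i j ^ 2 :=
  Real.sq_sqrt (by positivity)

lemma dotM_self (A : M33) : dotM A A = fnorm A ^ 2 := by
  rw [fnorm_sq, dotM]
  simp only [sq]

lemma fnorm_smul_sq (c : ℝ) (A : M33) : fnorm (c • A) ^ 2 = c ^ 2 * fnorm A ^ 2 := by
  simp only [fnorm_sq, Pi.smul_apply, smul_eq_mul, mul_pow, Finset.mul_sum]

lemma dotM_smul_left (c : ℝ) (X Y : M33) : dotM (c • X) Y = c * dotM X Y := by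
  simp only [dotM, Pi.smul_apply, smul_eq_mul, mul_assoc, Finset.mul_sum]

lemma dotM_smul_right (c : ℝ) (X Y : M33) : dotM X (c • Y) = c * dotM X Y := by
  simp only [dotM, Pi.smul_apply, smul_eq_mul, Finset.mul_sum, mul_left_comm c]

lemma dotM_sq_le (X Y : M33) : dotM X Y ^ 2 ≤ fnorm X ^ 2 * fnorm Y ^ 2 := by
  have h := Finset.sum_mul_sq_le_sq_mul_sq Finset.univ
    (fun p : Fin 3 × Fin 3 => X p.1 p.2) (fun p : Fin 3 × Fin 3 => Y p.1 p.2)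
  simpa only [Fintype.sum_prod_type, fnorm_sq, dotM] using h

lemma Tmap_smul (c : ℝ) (A : M33) : Tmap (c • A) = c ^ 2 • Tmap A := by
  ext i j
  simp only [Tmap, Pi.smul_apply, smul_eq_mul, Fin.sum_univ_succ, Fin.sum_univ_zero]
  ring

/-- `T(A) = 2 cof A`, and `|cof A|² = (|A|⁴ - |AᵀA|²) / 2`. -/
lemma fnorm_Tmap_sq (A : M33) :
    fnorm (Tmap A) ^ 2 = 2 * fnorm A ^ 4 - 2 * ∑ p, ∑ q, (∑ B, A B p * A B q) ^ 2 := by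
  rw [show fnorm A ^ 4 = (fnorm A ^ 2) ^ 2 by ring, fnorm_sq, fnorm_sq]
  simp only [Tmap, eps, Fin.sum_univ_succ, Fin.sum_univ_zero]
  norm_num
  ring

lemma fnorm_Tmap_sq_le (A : M33) : fnorm (Tmap A) ^ 2 ≤ 2 * fnorm A ^ 4 := by
  rw [fnorm_Tmap_sq]
  have : 0 ≤ ∑ p, ∑ q, (∑ B, A B p * A B q) ^ 2 := by positivity
  linarith

lemma dotM_Tmap_sq_le (lam A : M33) :
    dotM lam (Tmap A) ^ 2 ≤ 2 * fnorm lam ^ 2 * fnorm A ^ 4 :=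
  calc dotM lam (Tmap A) ^ 2 ≤ fnorm lam ^ 2 * fnorm (Tmap A) ^ 2 := dotM_sq_le _ _
    _ ≤ fnorm lam ^ 2 * (2 * fnorm A ^ 4) := by gcongr; exact fnorm_Tmap_sq_le A
    _ = 2 * fnorm lam ^ 2 * fnorm A ^ 4 := by ring

lemma neg_three_mul_fnorm_sq_le_dotM_Tmap {lam : M33} (hlam : fnorm lam ≤ 3 / 2) (A : M33) :
    -3 * fnorm A ^ 2 ≤ dotM lam (Tmap A) := by
  have hlam_sq : fnorm lam ^ 2 ≤ 9 / 4 := by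
    nlinarith [show 0 ≤ fnorm lam from Real.sqrt_nonneg _]
  have hsq : dotM lam (Tmap A) ^ 2 ≤ (3 * fnorm A ^ 2) ^ 2 := by
    nlinarith [dotM_Tmap_sq_le lam A, pow_nonneg (sq_nonneg (fnorm A)) 2]
  nlinarith [abs_le_of_sq_le_sq' hsq (by positivity)]

theorem stmt10 (lam mu : M33) (hlam : fnorm lam ≤ 3 / 2) :
    (((1 / 14) * fnorm mu ^ 2 : ℝ) : EReal) ≤
      gH (fun A => (1 / 2) * fnorm A ^ 2) lam mu ∧
    -- the witness `A = (1/7) μ` realizes the bound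
    (1 / 14) * fnorm mu ^ 2 ≤
      dotM ((1 / 7 : ℝ) • mu) mu + dotM lam (Tmap ((1 / 7 : ℝ) • mu))
        - (1 / 2) * fnorm ((1 / 7 : ℝ) • mu) ^ 2 := by
  have hwitness : (1 / 14) * fnorm mu ^ 2 ≤
      dotM ((1 / 7 : ℝ) • mu) mu + dotM lam (Tmap ((1 / 7 : ℝ) • mu))
        - (1 / 2) * fnorm ((1 / 7 : ℝ) • mu) ^ 2 := by
    rw [dotM_smul_left, Tmap_smul, dotM_smul_right, fnorm_smul_sq, dotM_self]
    linarith [neg_three_mul_fnorm_sq_le_dotM_Tmap hlam mu]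
  refine ⟨(EReal.coe_le_coe_iff.mpr hwitness).trans ?_, hwitness⟩
  exact le_iSup_of_le ((1 / 7 : ℝ) • mu) le_rfl
end
end

section
/- Let H(A) = (3/8)⁶ · (1/(4·18)) · |A|⁴. Then there exists a constant c > 0 such that for all λ, μ ∈ ℝ^{3×3}, g_H(λ, μ) ≥ c ( |μ|^{4/3} + |λ|² ). -/
open scoped BigOperators

noncomputable section

lemma Tmap_eq (A : M33) (Z p : Fin 3) :
    Tmap A Z p = 2 * (A (Z+1) (p+1) * A (Z+2) (p+2) - A (Z+1) (p+2) * A (Z+2) (p+1)) := by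
  fin_cases Z <;> fin_cases p <;>
    · simp [Tmap, eps, Fin.sum_univ_three]
      norm_num
      ring

lemma fnorm_nonneg (A : M33) : 0 ≤ fnorm A := Real.sqrt_nonneg _

lemma sq_fnorm (A : M33) : fnorm A ^ 2 = ∑ i, ∑ j, (A i j) ^ 2 :=
  Real.sq_sqrt (by positivity)

lemma four_entries_le (A : M33) (i1 i2 j1 j2 : Fin 3) (hi : i1 ≠ i2) (hj : j1 ≠ j2) :
    A i1 j1 ^ 2 + A i1 j2 ^ 2 + A i2 j1 ^ 2 + A i2 j2 ^ 2 ≤ fnorm A ^ 2 := by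
  rw [sq_fnorm]
  have hrow : ∀ i : Fin 3, A i j1 ^ 2 + A i j2 ^ 2 ≤ ∑ j, A i j ^ 2 := by
    intro i
    have : ∑ j ∈ ({j1, j2} : Finset (Fin 3)), A i j ^ 2 ≤ ∑ j, A i j ^ 2 :=
      Finset.sum_le_sum_of_subset_of_nonneg (Finset.subset_univ _)
        (fun _ _ _ => sq_nonneg _)
    rwa [Finset.sum_pair hj] at this
  have h2 : (∑ j, A i1 j ^ 2) + (∑ j, A i2 j ^ 2) ≤ ∑ i, ∑ j, A i j ^ 2 := by
    have : ∑ i ∈ ({i1, i2} : Finset (Fin 3)), (∑ j, A i j ^ 2) ≤ ∑ i, ∑ j, A i j ^ 2 :=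
      Finset.sum_le_sum_of_subset_of_nonneg (Finset.subset_univ _)
        (fun _ _ _ => Finset.sum_nonneg fun _ _ => sq_nonneg _)
    rwa [Finset.sum_pair hi] at this
  have h3 := hrow i1
  have h4 := hrow i2
  linarith

lemma Tmap_abs_le (A : M33) (Z p : Fin 3) : |Tmap A Z p| ≤ fnorm A ^ 2 := by
  rw [Tmap_eq]
  have h4 := four_entries_le A (Z+1) (Z+2) (p+1) (p+2) (by fin_cases Z <;> decide)
    (by fin_cases p <;> decide)
  set a := A (Z+1) (p+1); set b := A (Z+2) (p+2); set c := A (Z+1) (p+2); set d := A (Z+2) (p+1)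
  rw [abs_le]
  constructor <;> nlinarith [sq_nonneg (a+b), sq_nonneg (a-b), sq_nonneg (c+d), sq_nonneg (c-d)]

lemma entry_abs_le (A : M33) (i j : Fin 3) : |A i j| ≤ fnorm A := by
  have h : A i j ^ 2 ≤ ∑ i', ∑ j', A i' j' ^ 2 := by
    calc A i j ^ 2 ≤ ∑ j', A i j' ^ 2 :=
          Finset.single_le_sum (f := fun j' => A i j' ^ 2)
            (fun _ _ => sq_nonneg _) (Finset.mem_univ j)
      _ ≤ ∑ i', ∑ j', A i' j' ^ 2 :=
          Finset.single_le_sum (f := fun i' => ∑ j', A i' j' ^ 2)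
            (fun _ _ => Finset.sum_nonneg fun _ _ => sq_nonneg _) (Finset.mem_univ i)
  rw [← Real.sqrt_sq_eq_abs, fnorm]
  exact Real.sqrt_le_sqrt h

lemma dot_T_lower (lam A : M33) :
    -(9 * fnorm lam * fnorm A ^ 2) ≤ dotM lam (Tmap A) := by
  have key : ∀ Z p : Fin 3, -(fnorm lam * fnorm A ^ 2) ≤ lam Z p * Tmap A Z p := by
    intro Z p
    have h1 := entry_abs_le lam Z p
    have h2 := Tmap_abs_le A Z p
    have h3 : |lam Z p * Tmap A Z p| ≤ fnorm lam * fnorm A ^ 2 := by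
      rw [abs_mul]
      exact mul_le_mul h1 h2 (abs_nonneg _) (fnorm_nonneg _)
    have := neg_abs_le (lam Z p * Tmap A Z p)
    linarith
  have := key 0 0
  simp only [dotM, Fin.sum_univ_three]
  have k00 := key 0 0; have k01 := key 0 1; have k02 := key 0 2
  have k10 := key 1 0; have k11 := key 1 1; have k12 := key 1 2
  have k20 := key 2 0; have k21 := key 2 1; have k22 := key 2 2
  linarith

def A0 (Z p : Fin 3) (sg : ℝ) : M33 := fun B q =>
  (if B = Z + 1 ∧ q = p + 1 then 1 else 0) + (if B = Z + 2 ∧ q = p + 2 then sg else 0)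

lemma Tmap_smul_s13 (c : ℝ) (A : M33) (Z p : Fin 3) :
    Tmap (fun i j => c * A i j) Z p = c ^ 2 * Tmap A Z p := by
  rw [Tmap_eq, Tmap_eq]; ring

lemma dotM_smul_left_s13 (c : ℝ) (A B : M33) :
    dotM (fun i j => c * A i j) B = c * dotM A B := by
  simp only [dotM, Fin.sum_univ_three]; ring

lemma sq_fnorm_smul (c : ℝ) (A : M33) :
    fnorm (fun i j => c * A i j) ^ 2 = c ^ 2 * fnorm A ^ 2 := by
  rw [sq_fnorm, sq_fnorm]
  simp only [Fin.sum_univ_three]; ring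

lemma dot_T_A0 (lam : M33) (Z p : Fin 3) (sg : ℝ) :
    dotM lam (Tmap (A0 Z p sg)) = 2 * sg * lam Z p := by
  have hT : ∀ Z' p' : Fin 3, Tmap (A0 Z p sg) Z' p' =
      if Z' = Z ∧ p' = p then 2 * sg else 0 := by
    intro Z' p'
    rw [Tmap_eq]
    fin_cases Z <;> fin_cases p <;> fin_cases Z' <;> fin_cases p' <;>
      simp [A0] <;> norm_num
  simp only [dotM, Fin.sum_univ_three, hT]
  fin_cases Z <;> fin_cases p <;> simp <;> ring

lemma sq_fnorm_A0 (Z p : Fin 3) (sg : ℝ) (hsg : sg ^ 2 = 1) :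
    fnorm (A0 Z p sg) ^ 2 = 2 := by
  rw [sq_fnorm]
  fin_cases Z <;> fin_cases p <;> simp [A0, Fin.sum_univ_three] <;> norm_num [hsg]

lemma exists_big_entry (lam : M33) : ∃ Z p : Fin 3, fnorm lam ≤ 3 * |lam Z p| := by
  by_contra h
  push_neg at h
  have hs := sq_fnorm lam
  simp only [Fin.sum_univ_three] at hs
  have hn := fnorm_nonneg lam
  have key : ∀ Z p : Fin 3, lam Z p ^ 2 * 9 < fnorm lam ^ 2 := by
    intro Z p
    have h1 := h Z p
    have h2 := abs_nonneg (lam Z p)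
    nlinarith [sq_abs (lam Z p)]
  have k00 := key 0 0; have k01 := key 0 1; have k02 := key 0 2
  have k10 := key 1 0; have k11 := key 1 1; have k12 := key 1 2
  have k20 := key 2 0; have k21 := key 2 1; have k22 := key 2 2
  nlinarith

lemma dotM_smul_right_s13 (c : ℝ) (A B : M33) :
    dotM A (fun i j => c * B i j) = c * dotM A B := by
  simp only [dotM, Fin.sum_univ_three]; ring

lemma dot_self (mu : M33) : dotM mu mu = fnorm mu ^ 2 := by
  rw [sq_fnorm]; simp only [dotM, Fin.sum_univ_three]; ring


theorem stmt13 :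
    ∃ c > 0, ∀ lam mu : M33,
      ((c * (fnorm mu ^ ((4 : ℝ) / 3) + fnorm lam ^ 2) : ℝ) : EReal) ≤
        gH (fun A => (3 / 8 : ℝ) ^ 6 * (1 / (4 * 18)) * fnorm A ^ 4) lam mu := by
  refine ⟨1/100, by norm_num, fun lam mu => ?_⟩
  set H : M33 → ℝ := fun A => (3 / 8 : ℝ) ^ 6 * (1 / (4 * 18)) * fnorm A ^ 4 with hH
  have hsup : ∀ A : M33,
      ((dotM A mu + dotM lam (Tmap A) - H A : ℝ) : EReal) ≤ gH H lam mu :=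
    fun A => le_iSup (fun A : M33 => ((dotM A mu + dotM lam (Tmap A) - H A : ℝ) : EReal)) A
  suffices hval : ∃ A : M33,
      (1/100) * (fnorm mu ^ ((4:ℝ)/3) + fnorm lam ^ 2) ≤
        dotM A mu + dotM lam (Tmap A) - H A by
    obtain ⟨A, hA⟩ := hval
    exact le_trans (EReal.coe_le_coe_iff.mpr hA) (hsup A)
  have hC : H = fun A => (3 / 8 : ℝ) ^ 6 * (1 / (4 * 18)) * fnorm A ^ 4 := hH
  have hXnn : (0:ℝ) ≤ fnorm mu ^ ((4:ℝ)/3) := Real.rpow_nonneg (fnorm_nonneg mu) _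
  have hLnn := fnorm_nonneg lam
  by_cases hcase : fnorm mu ^ ((4:ℝ)/3) ≤ fnorm lam ^ 2
  · -- lambda branch
    obtain ⟨Z, p, hZp⟩ := exists_big_entry lam
    set sg : ℝ := if 0 ≤ lam Z p then 1 else -1 with hsg
    have hsg2 : sg ^ 2 = 1 := by rw [hsg]; split <;> norm_num
    have hsglam : sg * lam Z p = |lam Z p| := by
      rw [hsg]; split_ifs with h
      · rw [abs_of_nonneg h]; ring
      · rw [abs_of_neg (lt_of_not_ge h)]; ring
    set s0 := Real.sqrt (10 * fnorm lam) with hs0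
    have hs00 : 0 ≤ s0 := Real.sqrt_nonneg _
    have hs0sq : s0 ^ 2 = 10 * fnorm lam := Real.sq_sqrt (by positivity)
    set s : ℝ := if 0 ≤ dotM (A0 Z p sg) mu then s0 else -s0 with hs
    have hssq : s ^ 2 = 10 * fnorm lam := by
      rw [hs]; split_ifs
      · exact hs0sq
      · rw [neg_pow]; simp [hs0sq]
    have hsmu : 0 ≤ s * dotM (A0 Z p sg) mu := by
      rw [hs]; split_ifs with h
      · exact mul_nonneg hs00 h
      · push_neg at h
        nlinarith
    refine ⟨fun i j => s * A0 Z p sg i j, ?_⟩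
    have hTm : Tmap (fun i j => s * A0 Z p sg i j) =
        fun Z' p' => s ^ 2 * Tmap (A0 Z p sg) Z' p' :=
      funext fun Z' => funext fun p' => Tmap_smul_s13 s (A0 Z p sg) Z' p'
    have hdot1 : dotM (fun i j => s * A0 Z p sg i j) mu = s * dotM (A0 Z p sg) mu :=
      dotM_smul_left_s13 _ _ _
    have hdot2 : dotM lam (Tmap (fun i j => s * A0 Z p sg i j)) =
        s ^ 2 * (2 * sg * lam Z p) := by
      rw [hTm, dotM_smul_right_s13, dot_T_A0]
    have hf2 : fnorm (fun i j => s * A0 Z p sg i j) ^ 2 = s ^ 2 * 2 := by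
      rw [sq_fnorm_smul, sq_fnorm_A0 Z p sg hsg2]
    have hf4 : fnorm (fun i j => s * A0 Z p sg i j) ^ 4 = (s ^ 2 * 2) ^ 2 := by
      rw [show (4:ℕ) = 2 * 2 from rfl, pow_mul, hf2]
    have h2 : 2 * sg * lam Z p = 2 * |lam Z p| := by rw [← hsglam]; ring
    rw [hH]
    simp only
    rw [hdot1, hdot2, hssq, hf4, hssq, h2]
    have habs : 0 ≤ |lam Z p| := abs_nonneg _
    nlinarith [mul_le_mul_of_nonneg_left hZp hLnn]
  · -- mu branch
    push_neg at hcase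
    have hmun : 0 < fnorm mu := by
      rcases (fnorm_nonneg mu).eq_or_lt with h0 | h
      · exfalso
        rw [← h0, Real.zero_rpow (by norm_num)] at hcase
        nlinarith
      · exact h
    set X := fnorm mu ^ ((1:ℝ)/3) with hX
    have hX0 : 0 < X := Real.rpow_pos_of_pos hmun _
    have hX3 : X ^ 3 = fnorm mu := by
      rw [hX, ← Real.rpow_natCast (fnorm mu ^ ((1:ℝ)/3)) 3, ← Real.rpow_mul hmun.le]
      norm_num
    have hX4 : fnorm mu ^ ((4:ℝ)/3) = X ^ 4 := by
      rw [hX, ← Real.rpow_natCast (fnorm mu ^ ((1:ℝ)/3)) 4, ← Real.rpow_mul hmun.le]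
      norm_num
    have hL : fnorm lam ≤ X ^ 2 := by
      have h1 : fnorm lam ^ 2 < (X ^ 2) ^ 2 := by
        rw [← pow_mul]
        calc fnorm lam ^ 2 < fnorm mu ^ ((4:ℝ)/3) := hcase
          _ = X ^ 4 := hX4
      exact le_of_lt (lt_of_pow_lt_pow_left₀ 2 (sq_nonneg X) h1)
    set c0 : ℝ := X / 36 / fnorm mu with hc0
    refine ⟨fun i j => c0 * mu i j, ?_⟩
    have hdot1 : dotM (fun i j => c0 * mu i j) mu = X ^ 4 / 36 := by
      rw [dotM_smul_left_s13, dot_self, hc0, ← hX3]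
      field_simp
    have hf2 : fnorm (fun i j => c0 * mu i j) ^ 2 = (X / 36) ^ 2 := by
      rw [sq_fnorm_smul, hc0, ← hX3]
      field_simp
    have hf4 : fnorm (fun i j => c0 * mu i j) ^ 4 = (X / 36) ^ 4 := by
      rw [show (4:ℕ) = 2 * 2 from rfl, pow_mul, hf2, ← pow_mul]
    have hT := dot_T_lower lam (fun i j => c0 * mu i j)
    rw [hf2] at hT
    have hL2 : fnorm lam ^ 2 ≤ X ^ 4 := by rw [← hX4]; exact hcase.le
    rw [hH]
    simp only
    rw [hdot1, hf4, hX4]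
    nlinarith [hT, hL2, mul_le_mul_of_nonneg_right hL (sq_nonneg X), sq_nonneg X, hX0.le]
end
end
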